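/- Let n be a positive integer. Then in ℤ[q], ∑_{k=0}^{n-1} q^{(n-k)^2} · [n+k choose k]_q^2 · [n-1 choose k]_q^2 ≡ q·[n] (mod [n]·Φ_n(q)^2), i.e. the difference is divisible by [n]·Φ_n(q)^2 in ℚ[q]. -/

import Mathlib

open Finset Polynomial

/-- The variable `q` of the field of rational functions `ℚ(q)`. -/
noncomputable def q : RatFunc ℚ := RatFunc.X

/-- The `q`-shifted factorial `(q;q)_m = ∏_{i=1}^{m} (1 - q^i)` as an element of `ℚ(q)`. -/
noncomputable def qPoch (m : ℕ) : RatFunc ℚ := ∏ i ∈ Finset.range m, (1 - q ^ (i + 1))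

/-- The Gaussian `q`-binomial coefficient `[m choose k]_q`, viewed in `ℚ(q)`. -/
noncomputable def qbinom (m k : ℕ) : RatFunc ℚ :=
  if k ≤ m then qPoch m / (qPoch k * qPoch (m - k)) else 0

/-- The `q`-integer `[n] = 1 + q + ⋯ + q^{n-1}` as a polynomial in `ℚ[q]`. -/
noncomputable def qint (n : ℕ) : Polynomial ℚ := ∑ i ∈ Finset.range n, Polynomial.X ^ i

/-- The `q`-integer `[n]` viewed in `ℚ(q)`. -/
noncomputable def qintR (n : ℕ) : RatFunc ℚ :=
  algebraMap (Polynomial ℚ) (RatFunc ℚ) (qint n)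

/-- `A ≡ B (mod P)` for rational functions `A, B ∈ ℚ(q)` and a polynomial `P`:
`A - B` can be written as a fraction `a / b` of polynomials whose numerator `a` is
divisible by `P` and whose denominator `b` is coprime to `P`. -/
def ratModEq (P : Polynomial ℚ) (A B : RatFunc ℚ) : Prop :=
  ∃ a b : Polynomial ℚ, IsCoprime b P ∧ P ∣ a ∧
    A - B = algebraMap (Polynomial ℚ) (RatFunc ℚ) a / algebraMap (Polynomial ℚ) (RatFunc ℚ) b

-- abbreviation for the algebra map
noncomputable abbrev φ : Polynomial ℚ →+* RatFunc ℚ := algebraMap (Polynomial ℚ) (RatFunc ℚ)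

lemma φ_inj : Function.Injective φ := RatFunc.algebraMap_injective ℚ

lemma q_eq : q = φ Polynomial.X := (RatFunc.algebraMap_X).symm

lemma q_pow (m : ℕ) : q ^ m = φ (Polynomial.X ^ m) := by rw [q_eq, map_pow]

lemma q_ne_zero : q ≠ 0 := by
  rw [q_eq]
  simpa using fun h => X_ne_zero (φ_inj (by simpa using h))

lemma one_sub_q_pow_ne (j : ℕ) (hj : 1 ≤ j) : (1 : RatFunc ℚ) - q ^ j ≠ 0 := by
  have h : (1 : RatFunc ℚ) - q ^ j = φ (1 - Polynomial.X ^ j) := by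
    rw [map_sub, map_one, q_pow]
  rw [h]
  intro hc
  have h0 : (1 - Polynomial.X ^ j : Polynomial ℚ) = 0 := φ_inj (by simpa using hc)
  have hj0 : j ≠ 0 := by omega
  have h2 := congrArg (fun p => Polynomial.coeff p j) h0
  simp [Polynomial.coeff_one, hj0] at h2

lemma qPoch_succ (m : ℕ) : qPoch (m + 1) = qPoch m * (1 - q ^ (m + 1)) := by
  rw [qPoch, Finset.prod_range_succ]; rfl

lemma qPoch_ne (m : ℕ) : qPoch m ≠ 0 := by
  induction m with
  | zero => simp [qPoch]
  | succ m ih => rw [qPoch_succ]; exact mul_ne_zero ih (one_sub_q_pow_ne _ (Nat.succ_le_succ (Nat.zero_le m)))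

/-- polynomial Gaussian binomial, via the q-Pascal recursion -/
noncomputable def gb : ℕ → ℕ → Polynomial ℚ
  | _, 0 => 1
  | 0, _+1 => 0
  | m+1, k+1 => gb m k + Polynomial.X ^ (k+1) * gb m (k+1)

lemma gb_zero (m : ℕ) : gb m 0 = 1 := by cases m <;> rfl

lemma gb_eq_zero : ∀ m k : ℕ, m < k → gb m k = 0 := by
  intro m
  induction m with
  | zero => intro k hk; match k, hk with | k+1, _ => rfl
  | succ m ih =>
    intro k hk
    match k, hk with
    | k+1, hk =>
      show gb m k + Polynomial.X ^ (k+1) * gb m (k+1) = 0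
      rw [ih k (by omega), ih (k+1) (by omega)]
      ring

lemma gb_spec : ∀ m k : ℕ, k ≤ m → φ (gb m k) = qPoch m / (qPoch k * qPoch (m - k)) := by
  intro m
  induction m with
  | zero => intro k hk; interval_cases k; simp [gb_zero, qPoch]
  | succ m ih =>
    intro k hk
    match k with
    | 0 =>
      rw [gb_zero, map_one]
      have h0 : qPoch 0 = 1 := by simp [qPoch]
      rw [h0, one_mul, Nat.sub_zero, div_self (qPoch_ne _)]
    | k+1 =>
      rcases Nat.lt_or_ge k m with hkm | hkm
      · -- k + 1 ≤ m
        have h1 : k + 1 ≤ m := hkm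
        show φ (gb m k + Polynomial.X ^ (k+1) * gb m (k+1)) = _
        rw [map_add, map_mul, map_pow, ih k (by omega), ih (k+1) h1, ← q_eq]
        have e1 : m - k = (m - (k+1)) + 1 := by omega
        have e2 : m + 1 - (k + 1) = m - k := by omega
        rw [e2, e1, qPoch_succ (m - (k+1)), qPoch_succ k, qPoch_succ m]
        have hqk := qPoch_ne k
        have hqmk := qPoch_ne (m - (k+1))
        have h2 := one_sub_q_pow_ne (k+1) (by omega)
        have h3 := one_sub_q_pow_ne (m - (k+1) + 1) (by omega)
        have h4 : q ^ (k+1) * q ^ (m - (k+1) + 1) = q ^ (m+1) := by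
          rw [← pow_add]; congr 1; omega
        rw [← h4]
        field_simp
        ring
      · -- k ≥ m, so k = m (since k+1 ≤ m+1)
        have hkm' : k = m := by omega
        subst hkm'
        show φ (gb k k + Polynomial.X ^ (k+1) * gb k (k+1)) = _
        rw [gb_eq_zero k (k+1) (by omega)]
        simp only [mul_zero, add_zero]
        rw [ih k le_rfl]
        simp only [Nat.sub_self]
        have h0 : qPoch 0 = 1 := by simp [qPoch]
        rw [h0, mul_one, mul_one, div_self (qPoch_ne k), div_self (qPoch_ne (k+1))]

lemma qbinom_eq (m k : ℕ) (hk : k ≤ m) : qbinom m k = φ (gb m k) := by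
  rw [qbinom, if_pos hk, gb_spec m k hk]

lemma qbinom_zero (m : ℕ) : qbinom m 0 = 1 := by
  rw [qbinom_eq m 0 (Nat.zero_le m), gb_zero, map_one]

/-- `VV P m x`: the `P`-adic valuation of `x ∈ ℚ(q)` is at least `m`. -/
def VV (P : Polynomial ℚ) (m : ℕ) (x : RatFunc ℚ) : Prop :=
  ∃ a b : Polynomial ℚ, ¬ P ∣ b ∧ x * φ b = φ (P ^ m * a)

section VVlemmas
variable {P : Polynomial ℚ} {m m' : ℕ} {x y : RatFunc ℚ}

lemma VV_of_dvd (hP : Prime P) (h : P ^ m ∣ x') : VV P m (φ x') := by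
  obtain ⟨c, hc⟩ := h
  exact ⟨c, 1, by simpa using hP.not_dvd_one, by simp [hc]⟩

lemma VV_poly (hP : Prime P) (p : Polynomial ℚ) : VV P 0 (φ p) := ⟨p, 1, by simpa using hP.not_dvd_one, by simp⟩

lemma VV_zero (hP : Prime P) : VV P m 0 := ⟨0, 1, by simpa using hP.not_dvd_one, by simp⟩

lemma VV_add (hP : Prime P) (hx : VV P m x) (hy : VV P m y) : VV P m (x + y) := by
  obtain ⟨a1, b1, hb1, h1⟩ := hx
  obtain ⟨a2, b2, hb2, h2⟩ := hy
  refine ⟨a1 * b2 + a2 * b1, b1 * b2, fun h => ?_, ?_⟩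
  · rcases hP.dvd_mul.mp h with h | h <;> [exact hb1 h; exact hb2 h]
  · rw [map_mul, add_mul]
    calc x * (φ b1 * φ b2) + y * (φ b1 * φ b2)
        = (x * φ b1) * φ b2 + (y * φ b2) * φ b1 := by ring
      _ = φ (P ^ m * (a1 * b2 + a2 * b1)) := by rw [h1, h2, ← map_mul, ← map_mul, ← map_add]; ring_nf
    
lemma VV_neg (hP : Prime P) (hx : VV P m x) : VV P m (-x) := by
  obtain ⟨a, b, hb, h⟩ := hx
  exact ⟨-a, b, hb, by rw [neg_mul, h, ← map_neg]; ring_nf⟩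

lemma VV_sub (hP : Prime P) (hx : VV P m x) (hy : VV P m y) : VV P m (x - y) := by
  rw [sub_eq_add_neg]; exact VV_add hP hx (VV_neg hP hy)

lemma VV_mul (hP : Prime P) (hx : VV P m x) (hy : VV P m' y) : VV P (m + m') (x * y) := by
  obtain ⟨a1, b1, hb1, h1⟩ := hx
  obtain ⟨a2, b2, hb2, h2⟩ := hy
  refine ⟨a1 * a2, b1 * b2, fun h => ?_, ?_⟩
  · rcases hP.dvd_mul.mp h with h | h <;> [exact hb1 h; exact hb2 h]
  · rw [map_mul]
    calc x * y * (φ b1 * φ b2) = (x * φ b1) * (y * φ b2) := by ring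
      _ = φ (P ^ (m + m') * (a1 * a2)) := by rw [h1, h2, ← map_mul]; ring_nf

lemma VV_mono (hP : Prime P) (h : m' ≤ m) (hx : VV P m x) : VV P m' x := by
  obtain ⟨a, b, hb, hh⟩ := hx
  refine ⟨P ^ (m - m') * a, b, hb, ?_⟩
  rw [hh]; congr 1; rw [← mul_assoc, ← pow_add]; congr 2; omega

lemma VV_sum (hP : Prime P) {ι : Type*} {s : Finset ι} {f : ι → RatFunc ℚ} (h : ∀ i ∈ s, VV P m (f i)) :
    VV P m (∑ i ∈ s, f i) := by
  classical
  induction s using Finset.induction_on with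
  | empty => simpa using VV_zero hP
  | insert _ _ hni ih =>
    rename_i a s
    rw [Finset.sum_insert hni]
    exact VV_add hP (h a (Finset.mem_insert_self a s)) (ih fun i hi => h i (Finset.mem_insert_of_mem hi))

lemma VV_div (hP : Prime P) (hx : VV P m x) {b : Polynomial ℚ} (hb : ¬ P ∣ b) : VV P m (x / φ b) := by
  obtain ⟨a1, b1, hb1, h1⟩ := hx
  have hbne : b ≠ 0 := fun h => hb (h ▸ dvd_zero P)
  have hbne' : φ b ≠ 0 := fun h => hbne (φ_inj (by simpa using h))
  refine ⟨a1, b * b1, fun h => ?_, ?_⟩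
  · rcases hP.dvd_mul.mp h with h | h <;> [exact hb h; exact hb1 h]
  · rw [map_mul, div_mul_eq_mul_div, ← h1]
    field_simp

lemma VV_inv (hP : Prime P) {b : Polynomial ℚ} (hb : ¬ P ∣ b) : VV P 0 (φ b)⁻¹ := by
  have := VV_div hP (m := 0) (x := 1) (b := b) ?_ hb
  · simpa [one_div] using this
  · simpa using VV_poly hP 1

lemma VV_one (hP : Prime P) : VV P 0 (1 : RatFunc ℚ) := by simpa using VV_poly hP 1

lemma VV_natCast (hP : Prime P) (c : ℕ) : VV P 0 ((c : RatFunc ℚ)) := by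
  have : ((c : RatFunc ℚ)) = φ ((c : Polynomial ℚ)) := by push_cast; ring
  rw [this]; exact VV_poly hP _

lemma VV_conclude (hP : Prime P) {p : Polynomial ℚ} (h : VV P m (φ p)) : P ^ m ∣ p := by
  obtain ⟨a, b, hb, hh⟩ := h
  rw [← map_mul] at hh
  have : p * b = P ^ m * a := φ_inj hh
  exact hP.pow_dvd_of_dvd_mul_right m hb ⟨a, this⟩

end VVlemmas

section cyclotomic

lemma cyc_prime {d : ℕ} (hd : 0 < d) : Prime (cyclotomic d ℚ) :=
  UniqueFactorizationMonoid.irreducible_iff_prime.mp (cyclotomic.irreducible_rat hd)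

lemma cyc_dvd_X_pow_sub_one {d : ℕ} (hd : 0 < d) : cyclotomic d ℚ ∣ X ^ d - 1 := by
  rw [← prod_cyclotomic_eq_X_pow_sub_one hd ℚ]
  exact Finset.dvd_prod_of_mem _ (Nat.mem_divisors_self d hd.ne')

lemma cyc_dvd_one_sub_X_pow {d N : ℕ} (hd : 0 < d) (hdN : d ∣ N) :
    cyclotomic d ℚ ∣ 1 - X ^ N := by
  obtain ⟨c, rfl⟩ := hdN
  have h1 : (X : Polynomial ℚ) ^ d - 1 ∣ X ^ (d * c) - 1 := by
    have := sub_dvd_pow_sub_pow ((X : Polynomial ℚ) ^ d) 1 c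
    simpa [← pow_mul] using this
  have := (cyc_dvd_X_pow_sub_one hd).trans h1
  simpa using this.neg_right

lemma cyc_dvd_imp {d j : ℕ} (hd : 0 < d) (h : cyclotomic d ℚ ∣ 1 - X ^ j) : d ∣ j := by
  have hζ : IsPrimitiveRoot (Complex.exp (2 * Real.pi * Complex.I / d)) d :=
    Complex.isPrimitiveRoot_exp d hd.ne'
  set ζ := Complex.exp (2 * Real.pi * Complex.I / d)
  haveI : NeZero ((d : ℂ)) := ⟨by exact_mod_cast hd.ne'⟩
  have hroot : (cyclotomic d ℂ).IsRoot ζ := (Polynomial.isRoot_cyclotomic_iff).mpr hζ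
  have h2 : cyclotomic d ℂ ∣ (1 - X ^ j : Polynomial ℂ) := by
    have := Polynomial.map_dvd (algebraMap ℚ ℂ) h
    simpa [Polynomial.map_cyclotomic, Polynomial.map_sub, Polynomial.map_pow] using this
  obtain ⟨c, hc⟩ := h2
  have : (1 - X ^ j : Polynomial ℂ).eval ζ = 0 := by
    rw [hc, Polynomial.eval_mul, hroot, zero_mul]
  have hj : ζ ^ j = 1 := by
    have := this
    simp only [Polynomial.eval_sub, Polynomial.eval_one, Polynomial.eval_pow, Polynomial.eval_X] at this
    linear_combination -this
  exact (hζ.pow_eq_one_iff_dvd j).mp hj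

lemma cyc_not_dvd_one_sub_X_pow {d j : ℕ} (hd : 0 < d) (hdj : ¬ d ∣ j) :
    ¬ cyclotomic d ℚ ∣ 1 - X ^ j := fun h => hdj (cyc_dvd_imp hd h)

lemma cyc_not_dvd_X {d : ℕ} (hd : 2 ≤ d) : ¬ cyclotomic d ℚ ∣ X := by
  intro h
  have h1 : cyclotomic d ℚ ∣ X ^ d := h.trans (dvd_pow_self X (by omega))
  have h2 : cyclotomic d ℚ ∣ (1 : Polynomial ℚ) := by
    have := dvd_sub h1 (cyc_dvd_X_pow_sub_one (by omega : 0 < d))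
    simpa using this
  exact (cyc_prime (by omega : 0 < d)).not_dvd_one h2

lemma qint_mul : ∀ n : ℕ, qint n * (X - 1) = X ^ n - 1 := fun n => geom_sum_mul X n

lemma cyc_not_dvd_X_sub_one {d : ℕ} (hd : 2 ≤ d) : ¬ cyclotomic d ℚ ∣ (X - 1 : Polynomial ℚ) := by
  intro h
  have : cyclotomic d ℚ ∣ 1 - X ^ 1 := by simpa using h.neg_right
  exact (cyc_not_dvd_one_sub_X_pow (by omega) (by simp [Nat.dvd_one]; omega)) this

lemma cyc_dvd_qint {d n : ℕ} (hd : 2 ≤ d) (hdn : d ∣ n) (hn : 0 < n) :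
    cyclotomic d ℚ ∣ qint n := by
  have h1 : cyclotomic d ℚ ∣ qint n * (X - 1) := by
    rw [qint_mul]
    have := cyc_dvd_one_sub_X_pow (by omega : 0 < d) hdn
    simpa using this.neg_right
  rcases (cyc_prime (by omega)).dvd_mul.mp h1 with h | h
  · exact h
  · exact absurd h (cyc_not_dvd_X_sub_one hd)

lemma qint_eq_prod {n : ℕ} (hn : 0 < n) :
    qint n = ∏ e ∈ n.divisors.erase 1, cyclotomic e ℚ := by
  have h1 : (X - 1 : Polynomial ℚ) * qint n = (X - 1) * ∏ e ∈ n.divisors.erase 1, cyclotomic e ℚ := by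
    rw [mul_comm (X - 1 : Polynomial ℚ), qint_mul, ← prod_cyclotomic_eq_X_pow_sub_one hn ℚ]
    have h2 : (1 : ℕ) ∈ n.divisors := Nat.one_mem_divisors.mpr hn.ne'
    rw [← Finset.prod_erase_mul _ _ h2, cyclotomic_one, mul_comm]
  exact mul_left_cancel₀ (by intro h; simpa [Polynomial.coeff_one] using congrArg (fun p => Polynomial.coeff p 1) h) h1

end cyclotomic

noncomputable def tR (n k : ℕ) : RatFunc ℚ :=
  q ^ ((n - k) ^ 2) * qbinom (n + k) k ^ 2 * qbinom (n - 1) k ^ 2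

lemma tR_zero (n : ℕ) : tR n 0 = q ^ (n ^ 2) := by
  rw [tR, qbinom_zero, qbinom_zero]
  simp

lemma qbinom_step1 (m j : ℕ) :
    (1 - q ^ (j + 1)) * qbinom (m + j + 1) (j + 1) = (1 - q ^ (m + j + 1)) * qbinom (m + j) j := by
  rw [qbinom, if_pos (by omega), qbinom, if_pos (by omega),
      show m + j + 1 - (j + 1) = m from by omega, show m + j - j = m from by omega,
      show m + j + 1 = (m + j) + 1 from by omega, qPoch_succ (m + j), qPoch_succ j]
  have p1 := qPoch_ne (m + j)
  have p2 := qPoch_ne j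
  have p3 := qPoch_ne m
  have nz1 : (1 : RatFunc ℚ) - q ^ (j + 1) ≠ 0 := one_sub_q_pow_ne _ (by omega)
  field_simp

lemma qbinom_step2 (b j : ℕ) :
    (1 - q ^ (j + 1)) * qbinom (j + 1 + b) (j + 1) = (1 - q ^ (b + 1)) * qbinom (j + 1 + b) j := by
  rw [qbinom, if_pos (by omega), qbinom, if_pos (by omega),
      show j + 1 + b - (j + 1) = b from by omega, show j + 1 + b - j = b + 1 from by omega,
      qPoch_succ b, qPoch_succ j]
  have p1 := qPoch_ne (j + 1 + b)
  have p2 := qPoch_ne j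
  have p3 := qPoch_ne b
  have nz1 : (1 : RatFunc ℚ) - q ^ (j + 1) ≠ 0 := one_sub_q_pow_ne _ (by omega)
  have nz2 : (1 : RatFunc ℚ) - q ^ (b + 1) ≠ 0 := one_sub_q_pow_ne _ (by omega)
  field_simp

set_option maxHeartbeats 1600000 in
/-- The master step identity, in denominator-cleared form. -/
lemma tR_step (n k : ℕ) (h1 : 1 ≤ k) (h2 : k ≤ n - 1) :
    q * tR n k * (q ^ n * (1 - q ^ k) ^ 2) ^ 2
      = tR n (k - 1) * (q ^ n * (1 - q ^ k) ^ 2 - (1 - q ^ n) ^ 2 * q ^ k) ^ 2 := by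
  obtain ⟨j, rfl⟩ : ∃ j, k = j + 1 := ⟨k - 1, by omega⟩
  obtain ⟨b, rfl⟩ : ∃ b, n = j + 2 + b := ⟨n - (j + 2), by omega⟩
  simp only [Nat.add_sub_cancel]
  rw [tR, tR,
      show j + 2 + b - (j + 1) = b + 1 from by omega, show j + 2 + b - j = b + 2 from by omega,
      show j + 2 + b - 1 = j + 1 + b from by omega,
      show j + 2 + b + (j + 1) = j + 2 + b + j + 1 from by omega]
  have s1 := qbinom_step1 (j + 2 + b) j
  have s2 := qbinom_step2 b j
  set x1 := qbinom (j + 2 + b + j + 1) (j + 1) with hx1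
  set y1 := qbinom (j + 2 + b + j) j with hy1
  set x2 := qbinom (j + 1 + b) (j + 1) with hx2
  set y2 := qbinom (j + 1 + b) j with hy2
  have nz1 : (1 : RatFunc ℚ) - q ^ (j + 1) ≠ 0 := one_sub_q_pow_ne _ (by omega)
  refine mul_right_cancel₀ (pow_ne_zero 4 nz1) ?_
  linear_combination
    (q * q ^ ((b + 1) ^ 2) * (q ^ (j + 2 + b) * (1 - q ^ (j + 1)) ^ 2) ^ 2 *
      ((1 - q ^ (j + 1)) * x1 + (1 - q ^ (j + 2 + b + j + 1)) * y1) *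
      ((1 - q ^ (j + 1)) * x2) ^ 2) * s1 +
    (q * q ^ ((b + 1) ^ 2) * (q ^ (j + 2 + b) * (1 - q ^ (j + 1)) ^ 2) ^ 2 *
      (1 - q ^ (j + 2 + b + j + 1)) ^ 2 * y1 ^ 2 *
      ((1 - q ^ (j + 1)) * x2 + (1 - q ^ (b + 1)) * y2)) * s2

noncomputable def tP (n k : ℕ) : Polynomial ℚ :=
  X ^ ((n - k) ^ 2) * gb (n + k) k ^ 2 * gb (n - 1) k ^ 2

lemma tR_eq (n k : ℕ) (h : k ≤ n - 1) : tR n k = φ (tP n k) := by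
  rw [tR, tP, qbinom_eq _ _ (by omega), qbinom_eq _ _ (by omega), map_mul, map_mul,
      map_pow, map_pow, map_pow, ← q_eq]

/-- The polynomial whose divisibility by `[n]Φₙ²` is the theorem. -/
noncomputable def DD (n : ℕ) : Polynomial ℚ :=
  (∑ k ∈ Finset.range n, tP n k) - X * qint n

lemma sum_tR (n : ℕ) :
    (∑ k ∈ Finset.range n, tR n k) - q * qintR n = φ (DD n) := by
  rw [DD, map_sub, map_sum, map_mul, ← q_eq, qintR]
  congr 1
  refine Finset.sum_congr rfl fun k hk => tR_eq n k ?_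
  have := Finset.mem_range.mp hk; omega

section goalA

variable {d : ℕ}

lemma V0q (hd : 2 ≤ d) (j : ℕ) : VV (cyclotomic d ℚ) 0 (q ^ j) := by
  rw [q_pow]; exact VV_poly (cyc_prime (by omega)) _

lemma V0onesub (hd : 2 ≤ d) (j : ℕ) : VV (cyclotomic d ℚ) 0 (1 - q ^ j) := by
  have : (1 : RatFunc ℚ) - q ^ j = φ (1 - X ^ j) := by rw [map_sub, map_one, q_pow]
  rw [this]; exact VV_poly (cyc_prime (by omega)) _

lemma V1u (hd : 2 ≤ d) {N : ℕ} (hN : d ∣ N) : VV (cyclotomic d ℚ) 1 (1 - q ^ N) := by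
  have : (1 : RatFunc ℚ) - q ^ N = φ (1 - X ^ N) := by rw [map_sub, map_one, q_pow]
  rw [this]
  exact VV_of_dvd (cyc_prime (by omega)) (by rw [pow_one]; exact cyc_dvd_one_sub_X_pow (by omega) hN)

lemma V0t (hd : 2 ≤ d) {n k : ℕ} (h : k ≤ n - 1) : VV (cyclotomic d ℚ) 0 (tR n k) := by
  rw [tR_eq n k h]; exact VV_poly (cyc_prime (by omega)) _

lemma not_dvd_Dk (hd : 2 ≤ d) {n k : ℕ} (hdk : ¬ d ∣ k) :
    ¬ cyclotomic d ℚ ∣ (X ^ n * (1 - X ^ k) ^ 2) ^ 2 := by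
  intro h
  have hP := cyc_prime (show 0 < d from by omega)
  have h1 : cyclotomic d ℚ ∣ X ^ n * (1 - X ^ k) ^ 2 := hP.dvd_of_dvd_pow h
  rcases hP.dvd_mul.mp h1 with h2 | h2
  · exact cyc_not_dvd_X hd (hP.dvd_of_dvd_pow h2)
  · exact cyc_not_dvd_one_sub_X_pow (by omega) hdk (hP.dvd_of_dvd_pow h2)

lemma φ_Dk (n k : ℕ) : φ ((X ^ n * (1 - X ^ k) ^ 2) ^ 2) = (q ^ n * (1 - q ^ k) ^ 2) ^ 2 := by
  simp only [map_pow, map_mul, map_sub, map_one, ← q_eq]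

lemma Dk_ne (n k : ℕ) (hk : 1 ≤ k) : (q ^ n * (1 - q ^ k) ^ 2) ^ 2 ≠ 0 :=
  pow_ne_zero _ (mul_ne_zero (pow_ne_zero _ q_ne_zero) (pow_ne_zero _ (one_sub_q_pow_ne _ hk)))

lemma vd_step (hd : 2 ≤ d) {n k : ℕ} (hdn : d ∣ n) (hk1 : 1 ≤ k) (hk2 : k ≤ n - 1)
    (hdk : ¬ d ∣ k) : VV (cyclotomic d ℚ) 1 (q * tR n k - tR n (k - 1)) := by
  have hP := cyc_prime (show 0 < d from by omega)
  have e : (q * tR n k - tR n (k - 1)) * (q ^ n * (1 - q ^ k) ^ 2) ^ 2 =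
      -(tR n (k - 1) * ((1 - q ^ n) * (1 - q ^ n)) * q ^ k *
        (2 * (q ^ n * (1 - q ^ k) ^ 2) - (1 - q ^ n) ^ 2 * q ^ k)) := by
    linear_combination tR_step n k hk1 hk2
  have h1 : VV (cyclotomic d ℚ) 1 ((q * tR n k - tR n (k - 1)) * (q ^ n * (1 - q ^ k) ^ 2) ^ 2) := by
    rw [e]
    refine VV_neg hP ?_
    have v1 : VV (cyclotomic d ℚ) 1 (tR n (k - 1) * ((1 - q ^ n) * (1 - q ^ n))) := by
      have := VV_mul hP (V0t (d := d) (n := n) (k := k - 1) hd (by omega))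
        (VV_mul hP (V1u hd hdn) (V0onesub hd n))
      simpa using this
    have v2 : VV (cyclotomic d ℚ) 1 (tR n (k - 1) * ((1 - q ^ n) * (1 - q ^ n)) * q ^ k) := by
      have := VV_mul hP v1 (V0q hd k)
      simpa using this
    have v3 : VV (cyclotomic d ℚ) 0
        (2 * (q ^ n * (1 - q ^ k) ^ 2) - (1 - q ^ n) ^ 2 * q ^ k) := by
      refine VV_sub hP ?_ ?_
      · have := VV_mul hP (VV_natCast hP 2)
          (VV_mul hP (V0q hd n) (VV_mul hP (V0onesub hd k) (V0onesub hd k)))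
        simpa [pow_two] using this
      · have := VV_mul hP (VV_mul hP (V0onesub hd n) (V0onesub hd n)) (V0q hd k)
        simpa [pow_two] using this
    have := VV_mul hP v2 v3
    simpa using this
  have e2 : q * tR n k - tR n (k - 1)
      = ((q * tR n k - tR n (k - 1)) * (q ^ n * (1 - q ^ k) ^ 2) ^ 2) /
        φ ((X ^ n * (1 - X ^ k) ^ 2) ^ 2) := by
    rw [φ_Dk, mul_div_cancel_right₀ _ (Dk_ne n k hk1)]
  rw [e2]
  exact VV_div hP h1 (not_dvd_Dk hd hdk)

lemma vd_block (hd : 2 ≤ d) {n m i : ℕ} (hdn : n = m * d) (hi : i < m) :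
    ∀ j, j < d → VV (cyclotomic d ℚ) 1 (q ^ j * tR n (i * d + j) - tR n (i * d)) := by
  have hP := cyc_prime (show 0 < d from by omega)
  intro j
  induction j with
  | zero => intro _; simpa using VV_zero hP
  | succ j ih =>
    intro hj
    have hk1 : 1 ≤ i * d + (j + 1) := by omega
    have hk2 : i * d + (j + 1) ≤ n - 1 := by
      have h8 : (i + 1) * d ≤ m * d := Nat.mul_le_mul_right d (by omega)
      have h9 : (i + 1) * d = i * d + d := by ring
      omega
    have hdk : ¬ d ∣ i * d + (j + 1) := by
      intro h
      have h2 : d ∣ j + 1 := (Nat.dvd_add_right (Dvd.intro_left i rfl)).mp h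
      have := Nat.le_of_dvd (by omega) h2
      omega
    have hstep' : VV (cyclotomic d ℚ) 1 (q * tR n (i * d + (j + 1)) - tR n (i * d + j)) := by
      have e : i * d + (j + 1) - 1 = i * d + j := by omega
      rw [← e]; exact vd_step hd ⟨m, by rw [hdn]; ring⟩ hk1 hk2 hdk
    have e3 : q ^ (j + 1) * tR n (i * d + (j + 1)) - tR n (i * d)
        = q ^ j * (q * tR n (i * d + (j + 1)) - tR n (i * d + j))
          + (q ^ j * tR n (i * d + j) - tR n (i * d)) := by ring
    rw [e3]
    exact VV_add hP (by simpa using VV_mul hP (V0q hd j) hstep') (ih (by omega))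

lemma sum_blocks {M : Type*} [AddCommMonoid M] (f : ℕ → M) (m d : ℕ) :
    ∑ k ∈ Finset.range (m * d), f k = ∑ i ∈ Finset.range m, ∑ j ∈ Finset.range d, f (i * d + j) := by
  induction m with
  | zero => simp
  | succ m ih =>
    rw [show (m + 1) * d = m * d + d from by ring, Finset.sum_range_add, ih,
        Finset.sum_range_succ]

lemma goalA (n d : ℕ) (hd : 2 ≤ d) (hdn : d ∣ n) (hn : 1 ≤ n) :
    cyclotomic d ℚ ∣ DD n := by
  have hP := cyc_prime (show 0 < d from by omega)
  obtain ⟨m, hm⟩ := hdn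
  have hm1 : 1 ≤ m := by
    rcases Nat.eq_zero_or_pos m with h | h
    · rw [h, Nat.mul_zero] at hm; omega
    · exact h
  have hm' : n = m * d := by rw [hm]; ring
  -- block sums
  have hblock : ∀ i ∈ Finset.range m,
      VV (cyclotomic d ℚ) 1 (q ^ (d - 1) * ∑ j ∈ Finset.range d, tR n (i * d + j)) := by
    intro i hi
    have hi' := Finset.mem_range.mp hi
    have h1 : ∀ j ∈ Finset.range d,
        VV (cyclotomic d ℚ) 1
          (q ^ (d - 1) * tR n (i * d + j) - q ^ (d - 1 - j) * tR n (i * d)) := by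
      intro j hj
      have hj' := Finset.mem_range.mp hj
      have e : q ^ (d - 1) * tR n (i * d + j) - q ^ (d - 1 - j) * tR n (i * d)
          = q ^ (d - 1 - j) * (q ^ j * tR n (i * d + j) - tR n (i * d)) := by
        rw [mul_sub, ← mul_assoc, ← pow_add, show d - 1 - j + j = d - 1 from by omega]
      rw [e]
      simpa using VV_mul hP (V0q hd (d - 1 - j)) (vd_block hd hm' hi' j hj')
    have h2 := VV_sum hP h1
    have e2 : ∑ j ∈ Finset.range d,
        (q ^ (d - 1) * tR n (i * d + j) - q ^ (d - 1 - j) * tR n (i * d))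
        = q ^ (d - 1) * (∑ j ∈ Finset.range d, tR n (i * d + j))
          - (∑ j ∈ Finset.range d, q ^ (d - 1 - j)) * tR n (i * d) := by
      rw [Finset.sum_sub_distrib, Finset.mul_sum, Finset.sum_mul]
    rw [e2] at h2
    have e3 : (∑ j ∈ Finset.range d, q ^ (d - 1 - j)) = φ (qint d) := by
      rw [Finset.sum_range_reflect (fun j => q ^ j) d, qint, map_sum]
      exact Finset.sum_congr rfl fun j _ => by rw [map_pow, ← q_eq]
    have h3 : VV (cyclotomic d ℚ) 1 ((∑ j ∈ Finset.range d, q ^ (d - 1 - j)) * tR n (i * d)) := by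
      rw [e3]
      have hqd : VV (cyclotomic d ℚ) 1 (φ (qint d)) :=
        VV_of_dvd hP (by rw [pow_one]; exact cyc_dvd_qint hd (dvd_refl d) (by omega))
      have hik : i * d ≤ n - 1 := by
        have h8 : (i + 1) * d ≤ m * d := Nat.mul_le_mul_right d (by omega)
        have h9 : (i + 1) * d = i * d + d := by ring
        omega
      simpa using VV_mul hP hqd (V0t hd hik)
    have := VV_add hP h2 h3
    simpa using this
  have hS : VV (cyclotomic d ℚ) 1 (q ^ (d - 1) * ∑ k ∈ Finset.range n, tR n k) := by
    have e6 : Finset.range n = Finset.range (m * d) := by rw [hm']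
    rw [e6, sum_blocks (tR n) m d, Finset.mul_sum]
    exact VV_sum hP fun i hi => by simpa [Finset.mul_sum] using hblock i hi
  have hqn : VV (cyclotomic d ℚ) 1 (q ^ (d - 1) * (q * qintR n)) := by
    have h4 : VV (cyclotomic d ℚ) 1 (qintR n) :=
      VV_of_dvd hP (by rw [pow_one]; exact cyc_dvd_qint hd ⟨m, hm⟩ (by omega : 0 < n))
    simpa [mul_assoc] using VV_mul hP (VV_mul hP (V0q hd (d - 1)) (V0q hd 1)) h4
  have hD : VV (cyclotomic d ℚ) 1 (q ^ (d - 1) * φ (DD n)) := by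
    have := VV_sub hP hS hqn
    rw [← mul_sub, sum_tR n] at this
    exact this
  have e5 : φ (DD n) = (q ^ (d - 1) * φ (DD n)) / φ (X ^ (d - 1)) := by
    rw [← q_pow]
    rw [mul_comm, mul_div_cancel_right₀ _ (pow_ne_zero _ q_ne_zero)]
  have hnd : ¬ cyclotomic d ℚ ∣ X ^ (d - 1) := fun h =>
    cyc_not_dvd_X hd (hP.dvd_of_dvd_pow h)
  have h6 := VV_div hP hD hnd
  rw [← e5] at h6
  simpa using VV_conclude hP h6
end goalA

section goalB

/-- c_i = q^i / (q^n (1-q^i)²) as an element of ℚ(q) -/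
noncomputable def cc (n i : ℕ) : RatFunc ℚ := q ^ i / φ (X ^ n * (1 - X ^ i) ^ 2)

noncomputable def SC (n k : ℕ) : RatFunc ℚ := ∑ i ∈ Finset.range k, cc n (i + 1)

lemma φ_Dk1 (n i : ℕ) : φ (X ^ n * (1 - X ^ i) ^ 2) = q ^ n * (1 - q ^ i) ^ 2 := by
  simp only [map_mul, map_pow, map_sub, map_one, ← q_eq]

lemma Dk1_ne (n i : ℕ) (hi : 1 ≤ i) : (q ^ n * (1 - q ^ i) ^ 2) ≠ 0 :=
  mul_ne_zero (pow_ne_zero _ q_ne_zero) (pow_ne_zero _ (one_sub_q_pow_ne _ hi))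

lemma cc_mul (n i : ℕ) (hi : 1 ≤ i) :
    cc n i * (q ^ n * (1 - q ^ i) ^ 2) = q ^ i := by
  rw [cc, φ_Dk1, div_mul_cancel₀ _ (Dk1_ne n i hi)]

/-- (B-III): the exact product formula for the terms. -/
lemma prodform (n : ℕ) (hn : 2 ≤ n) : ∀ k, k ≤ n - 1 →
    tR n k * q ^ k = q ^ (n ^ 2) *
      ∏ i ∈ Finset.range k, (1 - (1 - q ^ n) ^ 2 * cc n (i + 1)) ^ 2 := by
  intro k
  induction k with
  | zero => intro _; rw [tR_zero]; simp
  | succ k ih =>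
    intro hk
    have hk' : k ≤ n - 1 := by omega
    have hDk := Dk1_ne n (k + 1) (by omega)
    refine mul_right_cancel₀ (pow_ne_zero 2 hDk) ?_
    have hstep := tR_step n (k + 1) (by omega) hk
    rw [Nat.add_sub_cancel] at hstep
    have hcc := cc_mul n (k + 1) (by omega)
    calc tR n (k + 1) * q ^ (k + 1) * (q ^ n * (1 - q ^ (k + 1)) ^ 2) ^ 2
        = (q * tR n (k + 1) * (q ^ n * (1 - q ^ (k + 1)) ^ 2) ^ 2) * q ^ k := by ring
      _ = (tR n k * (q ^ n * (1 - q ^ (k + 1)) ^ 2 - (1 - q ^ n) ^ 2 * q ^ (k + 1)) ^ 2) * q ^ k := by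
          rw [hstep]
      _ = (tR n k * q ^ k) * ((q ^ n * (1 - q ^ (k + 1)) ^ 2) * (1 - (1 - q ^ n) ^ 2 * cc n (k + 1))) ^ 2 := by
          rw [mul_sub, mul_one, show (q ^ n * (1 - q ^ (k + 1)) ^ 2) * ((1 - q ^ n) ^ 2 * cc n (k + 1))
              = (1 - q ^ n) ^ 2 * (cc n (k + 1) * (q ^ n * (1 - q ^ (k + 1)) ^ 2)) from by ring, hcc]
          ring
      _ = (q ^ (n ^ 2) * ∏ i ∈ Finset.range k, (1 - (1 - q ^ n) ^ 2 * cc n (i + 1)) ^ 2)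
            * ((q ^ n * (1 - q ^ (k + 1)) ^ 2) * (1 - (1 - q ^ n) ^ 2 * cc n (k + 1))) ^ 2 := by
          rw [ih hk']
      _ = (q ^ (n ^ 2) * ∏ i ∈ Finset.range (k + 1), (1 - (1 - q ^ n) ^ 2 * cc n (i + 1)) ^ 2)
            * (q ^ n * (1 - q ^ (k + 1)) ^ 2) ^ 2 := by
          rw [Finset.prod_range_succ]; ring

variable {n : ℕ}

lemma not_dvd_Dk1 (hn : 2 ≤ n) {i : ℕ} (hi1 : 1 ≤ i) (hi2 : i ≤ n - 1) :
    ¬ cyclotomic n ℚ ∣ X ^ n * (1 - X ^ i) ^ 2 := by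
  intro h
  have hP := cyc_prime (show 0 < n from by omega)
  rcases hP.dvd_mul.mp h with h2 | h2
  · exact cyc_not_dvd_X hn (hP.dvd_of_dvd_pow h2)
  · exact cyc_not_dvd_one_sub_X_pow (by omega) (fun hdvd => by
      have := Nat.le_of_dvd (by omega) hdvd; omega) (hP.dvd_of_dvd_pow h2)

lemma V0cc (hn : 2 ≤ n) {i : ℕ} (hi1 : 1 ≤ i) (hi2 : i ≤ n - 1) :
    VV (cyclotomic n ℚ) 0 (cc n i) := by
  have hP := cyc_prime (show 0 < n from by omega)
  exact VV_div hP (V0q hn i) (not_dvd_Dk1 hn hi1 hi2)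

lemma V0SC (hn : 2 ≤ n) {k : ℕ} (hk : k ≤ n - 1) :
    VV (cyclotomic n ℚ) 0 (SC n k) := by
  have hP := cyc_prime (show 0 < n from by omega)
  exact VV_sum hP fun i hi => V0cc hn (by omega) (by have := Finset.mem_range.mp hi; omega)

/-- (B-IV): mod u³, the product is 1 - 2u²·C_k. -/
lemma prodmod (hn : 2 ≤ n) : ∀ k, k ≤ n - 1 →
    VV (cyclotomic n ℚ) 3
      ((∏ i ∈ Finset.range k, (1 - (1 - q ^ n) ^ 2 * cc n (i + 1)) ^ 2)
        - (1 - 2 * (1 - q ^ n) ^ 2 * SC n k)) := by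
  have hP := cyc_prime (show 0 < n from by omega)
  intro k
  induction k with
  | zero => intro _; simp only [SC]; simpa using VV_zero hP
  | succ k ih =>
    intro hk
    have hk' : k ≤ n - 1 := by omega
    have hu : VV (cyclotomic n ℚ) 1 (1 - q ^ n) := V1u hn (dvd_refl n)
    have hc : VV (cyclotomic n ℚ) 0 (cc n (k + 1)) := V0cc hn (by omega) (by omega)
    have hC : VV (cyclotomic n ℚ) 0 (SC n k) := V0SC hn hk'
    have e : (∏ i ∈ Finset.range (k + 1), (1 - (1 - q ^ n) ^ 2 * cc n (i + 1)) ^ 2)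
        - (1 - 2 * (1 - q ^ n) ^ 2 * SC n (k + 1))
        = ((∏ i ∈ Finset.range k, (1 - (1 - q ^ n) ^ 2 * cc n (i + 1)) ^ 2)
            - (1 - 2 * (1 - q ^ n) ^ 2 * SC n k)) * (1 - (1 - q ^ n) ^ 2 * cc n (k + 1)) ^ 2
          + (1 - q ^ n) ^ 4 *
            (cc n (k + 1) ^ 2 + 4 * SC n k * cc n (k + 1)
              - 2 * (1 - q ^ n) ^ 2 * SC n k * cc n (k + 1) ^ 2) := by
      have eC : SC n (k + 1) = SC n k + cc n (k + 1) := by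
        simp only [SC, Finset.sum_range_succ]
      rw [Finset.prod_range_succ, eC]
      ring
    rw [e]
    have hOq : VV (cyclotomic n ℚ) 0 (1 - q ^ n) := V0onesub hn n
    have hu2 : VV (cyclotomic n ℚ) 0 ((1 - q ^ n) ^ 2) := by
      have := VV_mul hP hOq hOq
      simpa [pow_two] using this
    have hc2 : VV (cyclotomic n ℚ) 0 (cc n (k + 1) ^ 2) := by
      have := VV_mul hP hc hc
      simpa [pow_two] using this
    refine VV_add hP ?_ ?_
    · have v0 : VV (cyclotomic n ℚ) 0 ((1 - (1 - q ^ n) ^ 2 * cc n (k + 1)) ^ 2) := by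
        have h2 : VV (cyclotomic n ℚ) 0 (1 - (1 - q ^ n) ^ 2 * cc n (k + 1)) :=
          VV_sub hP (VV_one hP) (by simpa using VV_mul hP hu2 hc)
        have h3 := VV_mul hP (by simpa using h2) (by simpa using h2)
        simpa [pow_two] using h3
      simpa using VV_mul hP (ih hk') v0
    · have hu4 : VV (cyclotomic n ℚ) 3 ((1 - q ^ n) ^ 4) := by
        have h5 := VV_mul hP hu (VV_mul hP hu (VV_mul hP hu hOq))
        have e4 : (1 - q ^ n) ^ 4 = (1 - q ^ n) * ((1 - q ^ n) * ((1 - q ^ n) * (1 - q ^ n))) := by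
          ring
        rw [e4]
        simpa using h5
      have h1 : VV (cyclotomic n ℚ) 0 (4 * SC n k * cc n (k + 1)) := by
        simpa using VV_mul hP (VV_mul hP (VV_natCast hP 4) hC) hc
      have h3 : VV (cyclotomic n ℚ) 0 (2 * (1 - q ^ n) ^ 2 * SC n k * cc n (k + 1) ^ 2) := by
        simpa using VV_mul hP (VV_mul hP (VV_mul hP (VV_natCast hP 2) hu2) hC) hc2
      have hrest : VV (cyclotomic n ℚ) 0
          (cc n (k + 1) ^ 2 + 4 * SC n k * cc n (k + 1)
            - 2 * (1 - q ^ n) ^ 2 * SC n k * cc n (k + 1) ^ 2) :=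
        VV_sub hP (VV_add hP hc2 h1) h3
      simpa using VV_mul hP hu4 hrest

end goalB

section goalB2
variable {n : ℕ}

lemma VV_pow0 {P : Polynomial ℚ} (hP : Prime P) {x : RatFunc ℚ} (hx : VV P 0 x) (i : ℕ) :
    VV P 0 (x ^ i) := by
  induction i with
  | zero => simpa using VV_one hP
  | succ i ih => rw [pow_succ]; simpa using VV_mul hP ih hx

/-- mod u³ : q^(n²) ≡ 1 - n·u + C(n,2)·u². -/
lemma qnn (hn : 2 ≤ n) : VV (cyclotomic n ℚ) 3
    (q ^ (n ^ 2) - (1 - (n : RatFunc ℚ) * (1 - q ^ n)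
      + (n.choose 2 : RatFunc ℚ) * (1 - q ^ n) ^ 2)) := by
  have hP := cyc_prime (show 0 < n from by omega)
  have hu : VV (cyclotomic n ℚ) 1 (1 - q ^ n) := V1u hn (dvd_refl n)
  have hq : q ^ (n ^ 2) = (-(1 - q ^ n) + 1) ^ n := by
    rw [show (-(1 - q ^ n) + 1) = q ^ n from by ring, ← pow_mul, pow_two]
  rw [hq, add_pow]
  simp only [one_pow, mul_one]
  rw [show n + 1 = 3 + (n - 2) from by omega, Finset.sum_range_add]
  have e3 : ∑ x ∈ Finset.range 3, (-(1 - q ^ n)) ^ x * (n.choose x : RatFunc ℚ)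
      = 1 - (n : RatFunc ℚ) * (1 - q ^ n) + (n.choose 2 : RatFunc ℚ) * (1 - q ^ n) ^ 2 := by
    rw [Finset.sum_range_succ, Finset.sum_range_succ, Finset.sum_range_one]
    simp [Nat.choose_one_right]
    ring
  rw [e3]
  have etail : 1 - (n : RatFunc ℚ) * (1 - q ^ n) + (n.choose 2 : RatFunc ℚ) * (1 - q ^ n) ^ 2
      + (∑ x ∈ Finset.range (n - 2), (-(1 - q ^ n)) ^ (3 + x) * ((n.choose (3 + x) : RatFunc ℚ)))
      - (1 - (n : RatFunc ℚ) * (1 - q ^ n) + (n.choose 2 : RatFunc ℚ) * (1 - q ^ n) ^ 2)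
      = ∑ x ∈ Finset.range (n - 2), (-(1 - q ^ n)) ^ (3 + x) * ((n.choose (3 + x) : RatFunc ℚ)) := by
    ring
  rw [etail]
  refine VV_sum hP fun x _ => ?_
  have e5 : (-(1 - q ^ n)) ^ (3 + x) * ((n.choose (3 + x) : RatFunc ℚ))
      = ((1 - q ^ n) * ((1 - q ^ n) * (1 - q ^ n))) *
        ((-1) ^ (3 + x) * (1 - q ^ n) ^ x * (n.choose (3 + x) : RatFunc ℚ)) := by
    rw [neg_pow]
    ring
  rw [e5]
  have h6 : VV (cyclotomic n ℚ) 0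
      ((-1 : RatFunc ℚ) ^ (3 + x) * (1 - q ^ n) ^ x * (n.choose (3 + x) : RatFunc ℚ)) := by
    have hm1 : VV (cyclotomic n ℚ) 0 ((-1 : RatFunc ℚ) ^ (3 + x)) :=
      VV_pow0 hP (by simpa using VV_neg hP (VV_one hP)) _
    simpa using VV_mul hP (VV_mul hP hm1 (VV_pow0 hP (V0onesub hn n) x)) (VV_natCast hP _)
  simpa using VV_mul hP (VV_mul hP hu (VV_mul hP hu hu)) h6

lemma sum_swap_tri (f g : ℕ → RatFunc ℚ) (N : ℕ) :
    ∑ k ∈ Finset.range N, f k * (∑ i ∈ Finset.range k, g i)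
      = ∑ i ∈ Finset.range N, g i * (∑ k ∈ Finset.Ico (i + 1) N, f k) := by
  induction N with
  | zero => simp
  | succ N ih =>
    rw [Finset.sum_range_succ, ih, Finset.sum_range_succ, Finset.Ico_self, Finset.sum_empty,
        mul_zero, add_zero]
    have e : ∀ i ∈ Finset.range N, g i * (∑ k ∈ Finset.Ico (i + 1) (N + 1), f k)
        = g i * (∑ k ∈ Finset.Ico (i + 1) N, f k) + g i * f N := by
      intro i hi
      rw [Finset.sum_Ico_succ_top (Finset.mem_range.mp hi), mul_add]
    rw [Finset.sum_congr rfl e, Finset.sum_add_distrib, ← Finset.sum_mul]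
    ring

lemma pair_term (hn : 2 ≤ n) {a b : ℕ} (ha : 1 ≤ a) (hb : 1 ≤ b) (hab : a + b = n) :
    (φ (1 - X ^ a))⁻¹ + (φ (1 - X ^ b))⁻¹ - 1
      = (1 - q ^ n) / φ ((1 - X ^ a) * (1 - X ^ b)) := by
  have ea : φ (1 - X ^ a) = 1 - q ^ a := by rw [map_sub, map_one, q_pow]
  have eb : φ (1 - X ^ b) = 1 - q ^ b := by rw [map_sub, map_one, q_pow]
  have hA : (1 : RatFunc ℚ) - q ^ a ≠ 0 := one_sub_q_pow_ne _ ha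
  have hB : (1 : RatFunc ℚ) - q ^ b ≠ 0 := one_sub_q_pow_ne _ hb
  have hxy : q ^ a * q ^ b = q ^ n := by rw [← pow_add, hab]
  rw [map_mul, ea, eb]
  field_simp
  linear_combination -hxy

lemma sumX (hn : 2 ≤ n) : VV (cyclotomic n ℚ) 1
    ((1 - (n : RatFunc ℚ)) + 2 * ∑ i ∈ Finset.range (n - 1), (φ (1 - X ^ (i + 1)))⁻¹) := by
  have hP := cyc_prime (show 0 < n from by omega)
  have hrefl : ∑ i ∈ Finset.range (n - 1), (φ (1 - X ^ (i + 1)))⁻¹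
      = ∑ i ∈ Finset.range (n - 1), (φ (1 - X ^ (n - 1 - i)))⁻¹ := by
    rw [← Finset.sum_range_reflect (fun i => (φ (1 - X ^ (i + 1)))⁻¹) (n - 1)]
    refine Finset.sum_congr rfl fun i hi => ?_
    have hi' := Finset.mem_range.mp hi
    have e9 : n - 1 - 1 - i + 1 = n - 1 - i := by omega
    rw [e9]
  have ekey : (1 - (n : RatFunc ℚ)) + 2 * ∑ i ∈ Finset.range (n - 1), (φ (1 - X ^ (i + 1)))⁻¹
      = ∑ i ∈ Finset.range (n - 1),
          ((φ (1 - X ^ (i + 1)))⁻¹ + (φ (1 - X ^ (n - 1 - i)))⁻¹ - 1) := by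
    rw [Finset.sum_sub_distrib, Finset.sum_add_distrib, ← hrefl, Finset.sum_const,
        Finset.card_range]
    have : ((n - 1 : ℕ) : RatFunc ℚ) = (n : RatFunc ℚ) - 1 := by
      have : (1 : ℕ) ≤ n := by omega
      push_cast [Nat.cast_sub this]
      ring
    rw [nsmul_eq_mul, this]
    ring
  rw [ekey]
  refine VV_sum hP fun i hi => ?_
  have hi' := Finset.mem_range.mp hi
  rw [pair_term (a := i + 1) (b := n - 1 - i) hn (by omega) (by omega) (by omega)]
  refine VV_div hP (V1u hn (dvd_refl n)) ?_
  intro h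
  rcases hP.dvd_mul.mp h with h2 | h2
  · exact cyc_not_dvd_one_sub_X_pow (by omega) (fun hd => by
      have := Nat.le_of_dvd (by omega) hd; omega) h2
  · exact cyc_not_dvd_one_sub_X_pow (by omega) (fun hd => by
      have := Nat.le_of_dvd (by omega) hd; omega) h2

end goalB2

section goalB3
variable {n : ℕ}

lemma hq1' (M : ℕ) : (1 - q) * φ (qint M) = 1 - q ^ M := by
  have h := congrArg φ (qint_mul M)
  simp only [map_mul, map_sub, map_pow, map_one, ← q_eq] at h
  linear_combination -h

lemma sum_pow_reflect (N : ℕ) : (∑ k ∈ Finset.range N, q ^ (N - 1 - k)) = φ (qint N) := by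
  rw [Finset.sum_range_reflect (fun j => q ^ j) N, qint, map_sum]
  exact Finset.sum_congr rfl fun j _ => by rw [map_pow, ← q_eq]

lemma cc_key (hn : 2 ≤ n) {a : ℕ} (ha : 1 ≤ a) (han : a ≤ n - 1) :
    (1 - q) * (cc n a * φ (qint (n - a))) + (φ (X ^ n * (1 - X ^ a)))⁻¹
      = (1 - q ^ n) * (φ (X ^ n * (1 - X ^ a) ^ 2))⁻¹ := by
  have e1 : φ (X ^ n * (1 - X ^ a)) = q ^ n * (1 - q ^ a) := by
    simp only [map_mul, map_sub, map_pow, map_one, ← q_eq]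
  have e2 := φ_Dk1 n a
  have hxy : q ^ a * q ^ (n - a) = q ^ n := by rw [← pow_add]; congr 1; omega
  rw [cc, e1, e2]
  have hQint := hq1' (n - a)
  have hA : (1 : RatFunc ℚ) - q ^ a ≠ 0 := one_sub_q_pow_ne _ ha
  have hqn : (q : RatFunc ℚ) ^ n ≠ 0 := pow_ne_zero _ q_ne_zero
  have key2 : (1 - q) * (q ^ a / (q ^ n * (1 - q ^ a) ^ 2) * φ (qint (n - a)))
        + (q ^ n * (1 - q ^ a))⁻¹
      = ((1 - q) * φ (qint (n - a)) * q ^ a + (1 - q ^ a)) / (q ^ n * (1 - q ^ a) ^ 2) := by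
    field_simp
  rw [key2, show (1 - q) * φ (qint (n - a)) * q ^ a + (1 - q ^ a) = 1 - q ^ n from by
    linear_combination q ^ a * hQint - hxy, div_eq_mul_inv]

lemma goalB (hn : 2 ≤ n) : (cyclotomic n ℚ) ^ 3 ∣ DD n := by
  have hP := cyc_prime (show 0 < n from by omega)
  have hu : VV (cyclotomic n ℚ) 1 (1 - q ^ n) := V1u hn (dvd_refl n)
  have hu2 : VV (cyclotomic n ℚ) 2 ((1 - q ^ n) ^ 2) := by
    have := VV_mul hP hu hu
    simpa [pow_two] using this
  have hV0u : VV (cyclotomic n ℚ) 0 (1 - q ^ n) := V0onesub hn n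
  have hV0q1 : VV (cyclotomic n ℚ) 0 (1 - q) := by
    have := V0onesub hn 1
    simpa using this
  set S := ∑ k ∈ Finset.range n, tR n k with hSdef
  set Q := φ (qint n) with hQdef
  set G := ∑ k ∈ Finset.range n, q ^ (n - 1 - k) * SC n k with hGdef
  have hV0G : VV (cyclotomic n ℚ) 0 G := by
    refine VV_sum hP fun k hk => ?_
    have hk' := Finset.mem_range.mp hk
    simpa using VV_mul hP (V0q hn (n - 1 - k)) (V0SC hn (by omega))
  have hV0Q : VV (cyclotomic n ℚ) 0 Q := VV_poly hP _
  -- step: q^(n-1) * S ≈₃ q^(n²) * (Q - 2u²G)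
  have hsum : VV (cyclotomic n ℚ) 3
      (q ^ (n - 1) * S - q ^ (n ^ 2) * (Q - 2 * (1 - q ^ n) ^ 2 * G)) := by
    have e1 : q ^ (n - 1) * S = ∑ k ∈ Finset.range n,
        q ^ (n - 1 - k) * (q ^ (n ^ 2) * ∏ i ∈ Finset.range k,
          (1 - (1 - q ^ n) ^ 2 * cc n (i + 1)) ^ 2) := by
      rw [hSdef, Finset.mul_sum]
      refine Finset.sum_congr rfl fun k hk => ?_
      have hk' := Finset.mem_range.mp hk
      rw [← prodform n hn k (by omega)]
      have e2 : q ^ (n - 1 - k) * q ^ k = q ^ (n - 1) := by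
        rw [← pow_add]; congr 1; omega
      calc q ^ (n - 1) * tR n k = (q ^ (n - 1 - k) * q ^ k) * tR n k := by rw [e2]
        _ = q ^ (n - 1 - k) * (tR n k * q ^ k) := by ring
    have e3 : (∑ k ∈ Finset.range n,
        q ^ (n - 1 - k) * (q ^ (n ^ 2) * (1 - 2 * (1 - q ^ n) ^ 2 * SC n k)))
        = q ^ (n ^ 2) * (Q - 2 * (1 - q ^ n) ^ 2 * G) := by
      calc (∑ k ∈ Finset.range n,
          q ^ (n - 1 - k) * (q ^ (n ^ 2) * (1 - 2 * (1 - q ^ n) ^ 2 * SC n k)))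
          = ∑ k ∈ Finset.range n, (q ^ (n ^ 2) * q ^ (n - 1 - k)
            - (q ^ (n ^ 2) * (2 * (1 - q ^ n) ^ 2)) * (q ^ (n - 1 - k) * SC n k)) :=
          Finset.sum_congr rfl fun k _ => by ring
        _ = q ^ (n ^ 2) * (∑ k ∈ Finset.range n, q ^ (n - 1 - k))
            - (q ^ (n ^ 2) * (2 * (1 - q ^ n) ^ 2)) * G := by
          rw [Finset.sum_sub_distrib, ← Finset.mul_sum, ← Finset.mul_sum, hGdef]
        _ = q ^ (n ^ 2) * (Q - 2 * (1 - q ^ n) ^ 2 * G) := by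
          rw [sum_pow_reflect n, ← hQdef]
          ring
    rw [e1, ← e3, ← Finset.sum_sub_distrib]
    refine VV_sum hP fun k hk => ?_
    have hk' := Finset.mem_range.mp hk
    have e4 : q ^ (n - 1 - k) * (q ^ (n ^ 2) * ∏ i ∈ Finset.range k,
          (1 - (1 - q ^ n) ^ 2 * cc n (i + 1)) ^ 2)
        - q ^ (n - 1 - k) * (q ^ (n ^ 2) * (1 - 2 * (1 - q ^ n) ^ 2 * SC n k))
        = (q ^ (n - 1 - k) * q ^ (n ^ 2)) * ((∏ i ∈ Finset.range k,
            (1 - (1 - q ^ n) ^ 2 * cc n (i + 1)) ^ 2) - (1 - 2 * (1 - q ^ n) ^ 2 * SC n k)) := by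
      ring
    rw [e4]
    simpa using VV_mul hP (VV_mul hP (V0q hn (n - 1 - k)) (V0q hn (n ^ 2)))
      (prodmod hn k (by omega))
  have hqnn : VV (cyclotomic n ℚ) 3 (q ^ (n ^ 2) - (1 - (n : RatFunc ℚ) * (1 - q ^ n)
      + (n.choose 2 : RatFunc ℚ) * (1 - q ^ n) ^ 2)) := qnn hn
  have hsum2 : VV (cyclotomic n ℚ) 3
      (q ^ (n - 1) * S - ((1 - (n : RatFunc ℚ) * (1 - q ^ n)
        + (n.choose 2 : RatFunc ℚ) * (1 - q ^ n) ^ 2) * Q - 2 * (1 - q ^ n) ^ 2 * G)) := by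
    have h1 : VV (cyclotomic n ℚ) 3 ((q ^ (n ^ 2) - (1 - (n : RatFunc ℚ) * (1 - q ^ n)
        + (n.choose 2 : RatFunc ℚ) * (1 - q ^ n) ^ 2)) * Q) := by
      simpa using VV_mul hP hqnn hV0Q
    have h2 : VV (cyclotomic n ℚ) 3 ((1 - q ^ (n ^ 2)) * (2 * (1 - q ^ n) ^ 2 * G)) := by
      have hv1 : VV (cyclotomic n ℚ) 1 (1 - q ^ (n ^ 2)) := V1u hn ⟨n, by ring⟩
      have := VV_mul hP hv1 (VV_mul hP (VV_mul hP (VV_natCast hP 2) hu2) hV0G)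
      simpa using this
    have e5 : q ^ (n - 1) * S - ((1 - (n : RatFunc ℚ) * (1 - q ^ n)
          + (n.choose 2 : RatFunc ℚ) * (1 - q ^ n) ^ 2) * Q - 2 * (1 - q ^ n) ^ 2 * G)
        = (q ^ (n - 1) * S - q ^ (n ^ 2) * (Q - 2 * (1 - q ^ n) ^ 2 * G))
          + ((q ^ (n ^ 2) - (1 - (n : RatFunc ℚ) * (1 - q ^ n)
            + (n.choose 2 : RatFunc ℚ) * (1 - q ^ n) ^ 2)) * Q)
          + ((1 - q ^ (n ^ 2)) * (2 * (1 - q ^ n) ^ 2 * G)) := by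
      ring
    rw [e5]
    exact VV_add hP (VV_add hP hsum h1) h2
  -- the main exact algebraic identity
  have hDD : S - q * Q = φ (DD n) := by
    have h := sum_tR n
    rwa [show qintR n = Q from rfl] at h
  have hq2 : q ^ (n - 1) * q = q ^ n := by rw [← pow_succ]; congr 1; omega
  have hq1n : (1 - q) * Q = 1 - q ^ n := hq1' n
  have e_main : (1 - q) * q ^ (n - 1) * φ (DD n)
        - (1 - q ^ n) ^ 2 * ((1 - (n : RatFunc ℚ)) - 2 * (1 - q) * G)
      = (1 - q) * (q ^ (n - 1) * S - ((1 - (n : RatFunc ℚ) * (1 - q ^ n)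
          + (n.choose 2 : RatFunc ℚ) * (1 - q ^ n) ^ 2) * Q - 2 * (1 - q ^ n) ^ 2 * G))
        + (n.choose 2 : RatFunc ℚ) * (1 - q ^ n) ^ 3 := by
    rw [← hDD]
    linear_combination (-(1 - q) * Q) * hq2 +
      ((1 - (n : RatFunc ℚ) * (1 - q ^ n) + (n.choose 2 : RatFunc ℚ) * (1 - q ^ n) ^ 2)
        - q ^ n) * hq1n
  have hfinal : VV (cyclotomic n ℚ) 3 ((1 - q) * q ^ (n - 1) * φ (DD n)
      - (1 - q ^ n) ^ 2 * ((1 - (n : RatFunc ℚ)) - 2 * (1 - q) * G)) := by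
    rw [e_main]
    refine VV_add hP (by simpa using VV_mul hP hV0q1 hsum2) ?_
    have h7 : VV (cyclotomic n ℚ) 3 ((1 - q ^ n) ^ 3) := by
      have := VV_mul hP hu (VV_mul hP hu hu)
      have e7 : (1 - q ^ n) ^ 3 = (1 - q ^ n) * ((1 - q ^ n) * (1 - q ^ n)) := by ring
      rw [e7]
      simpa using this
    simpa using VV_mul hP (VV_natCast hP _) h7
  -- VV 1 of E
  have hswap : G = ∑ i ∈ Finset.range n, cc n (i + 1) * (∑ k ∈ Finset.Ico (i + 1) n, q ^ (n - 1 - k)) := by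
    rw [hGdef]
    simp only [SC]
    exact sum_swap_tri _ _ n
  have hinner : ∀ i, i < n → (∑ k ∈ Finset.Ico (i + 1) n, q ^ (n - 1 - k)) = φ (qint (n - 1 - i)) := by
    intro i hi
    rw [Finset.sum_Ico_eq_sum_range, ← sum_pow_reflect (n - 1 - i),
        show n - (i + 1) = n - 1 - i from by omega]
    refine Finset.sum_congr rfl fun x hx => ?_
    congr 1
    have := Finset.mem_range.mp hx
    omega
  have hsplit : G = ∑ i ∈ Finset.range (n - 1), cc n (i + 1) * φ (qint (n - 1 - i)) := by
    rw [hswap, show Finset.range n = Finset.range ((n - 1) + 1) from by congr 1; omega,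
        Finset.sum_range_succ, show n - 1 + 1 = n from by omega, Finset.Ico_self,
        Finset.sum_empty, mul_zero, add_zero]
    exact Finset.sum_congr rfl fun i hi => by
      rw [hinner i (by have := Finset.mem_range.mp hi; omega)]
  have hGS : VV (cyclotomic n ℚ) 1
      ((1 - q) * G + ∑ i ∈ Finset.range (n - 1), (φ (X ^ n * (1 - X ^ (i + 1))))⁻¹) := by
    rw [hsplit, Finset.mul_sum, ← Finset.sum_add_distrib]
    refine VV_sum hP fun i hi => ?_
    have hi' := Finset.mem_range.mp hi
    rw [show n - 1 - i = n - (i + 1) from by omega,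
        cc_key hn (a := i + 1) (by omega) (by omega)]
    rw [← div_eq_mul_inv]
    exact VV_div hP hu (not_dvd_Dk1 hn (by omega) (by omega))
  have hqn_ne : (q : RatFunc ℚ) ^ n ≠ 0 := pow_ne_zero _ q_ne_zero
  have hnX : ¬ cyclotomic n ℚ ∣ X ^ n := fun h => cyc_not_dvd_X hn (hP.dvd_of_dvd_pow h)
  have hterm : ∀ i ∈ Finset.range (n - 1),
      q ^ n * (φ (X ^ n * (1 - X ^ (i + 1))))⁻¹ = (φ (1 - X ^ (i + 1)))⁻¹ := by
    intro i _
    rw [map_mul, ← q_pow, mul_inv, ← mul_assoc, mul_inv_cancel₀ hqn_ne, one_mul]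
  have hsums : ∑ i ∈ Finset.range (n - 1), q ^ n * (φ (X ^ n * (1 - X ^ (i + 1))))⁻¹
      = ∑ i ∈ Finset.range (n - 1), (φ (1 - X ^ (i + 1)))⁻¹ :=
    Finset.sum_congr rfl hterm
  have hbridge : q ^ n * ((1 - (n : RatFunc ℚ))
        + 2 * ∑ i ∈ Finset.range (n - 1), (φ (X ^ n * (1 - X ^ (i + 1))))⁻¹)
      = ((1 - (n : RatFunc ℚ)) + 2 * ∑ i ∈ Finset.range (n - 1), (φ (1 - X ^ (i + 1)))⁻¹)
        - (1 - (n : RatFunc ℚ)) * (1 - q ^ n) := by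
    rw [mul_add, show q ^ n * (2 * ∑ i ∈ Finset.range (n - 1),
          (φ (X ^ n * (1 - X ^ (i + 1))))⁻¹)
        = 2 * ∑ i ∈ Finset.range (n - 1), q ^ n * (φ (X ^ n * (1 - X ^ (i + 1))))⁻¹ from by
        rw [mul_left_comm, Finset.mul_sum], hsums]
    ring
  have hE2 : VV (cyclotomic n ℚ) 1
      ((1 - (n : RatFunc ℚ)) + 2 * ∑ i ∈ Finset.range (n - 1), (φ (X ^ n * (1 - X ^ (i + 1))))⁻¹) := by
    have h8 : VV (cyclotomic n ℚ) 1
        (((1 - (n : RatFunc ℚ)) + 2 * ∑ i ∈ Finset.range (n - 1), (φ (1 - X ^ (i + 1)))⁻¹)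
          - (1 - (n : RatFunc ℚ)) * (1 - q ^ n)) := by
      refine VV_sub hP (sumX hn) ?_
      simpa using VV_mul hP (VV_sub hP (VV_one hP) (VV_natCast hP n)) hu
    have h10 : VV (cyclotomic n ℚ) 1 (q ^ n * ((1 - (n : RatFunc ℚ))
        + 2 * ∑ i ∈ Finset.range (n - 1), (φ (X ^ n * (1 - X ^ (i + 1))))⁻¹)) := by
      rw [hbridge]; exact h8
    have e9 : (1 - (n : RatFunc ℚ))
          + 2 * ∑ i ∈ Finset.range (n - 1), (φ (X ^ n * (1 - X ^ (i + 1))))⁻¹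
        = (q ^ n * ((1 - (n : RatFunc ℚ))
          + 2 * ∑ i ∈ Finset.range (n - 1), (φ (X ^ n * (1 - X ^ (i + 1))))⁻¹)) / φ (X ^ n) := by
      rw [← q_pow, mul_div_cancel_left₀ _ hqn_ne]
    rw [e9]
    exact VV_div hP h10 hnX
  have hE1 : VV (cyclotomic n ℚ) 1 ((1 - (n : RatFunc ℚ)) - 2 * (1 - q) * G) := by
    have e : (1 - (n : RatFunc ℚ)) - 2 * (1 - q) * G
        = ((1 - (n : RatFunc ℚ))
            + 2 * ∑ i ∈ Finset.range (n - 1), (φ (X ^ n * (1 - X ^ (i + 1))))⁻¹)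
          - 2 * ((1 - q) * G + ∑ i ∈ Finset.range (n - 1), (φ (X ^ n * (1 - X ^ (i + 1))))⁻¹) := by
      ring
    rw [e]
    exact VV_sub hP hE2 (by simpa using VV_mul hP (VV_natCast hP 2) hGS)
  have hu2E : VV (cyclotomic n ℚ) 3
      ((1 - q ^ n) ^ 2 * ((1 - (n : RatFunc ℚ)) - 2 * (1 - q) * G)) := by
    simpa using VV_mul hP hu2 hE1
  have hDD3 : VV (cyclotomic n ℚ) 3 ((1 - q) * q ^ (n - 1) * φ (DD n)) := by
    have h11 := VV_add hP hfinal hu2E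
    simpa using h11
  have hφd : φ ((1 - X) * X ^ (n - 1)) = (1 - q) * q ^ (n - 1) := by
    simp only [map_mul, map_sub, map_pow, map_one, ← q_eq]
  have hden_ne : ((1 : RatFunc ℚ) - q) * q ^ (n - 1) ≠ 0 := by
    refine mul_ne_zero ?_ (pow_ne_zero _ q_ne_zero)
    have := one_sub_q_pow_ne 1 le_rfl
    simpa using this
  have e_div : φ (DD n) = ((1 - q) * q ^ (n - 1) * φ (DD n)) / φ ((1 - X) * X ^ (n - 1)) := by
    rw [hφd]
    exact (mul_div_cancel_left₀ _ hden_ne).symm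
  have hnd : ¬ cyclotomic n ℚ ∣ (1 - X) * X ^ (n - 1) := by
    intro h
    rcases hP.dvd_mul.mp h with h2 | h2
    · have h3 := cyc_not_dvd_one_sub_X_pow (show 0 < n from by omega)
        (show ¬ n ∣ 1 from fun hd => by have := Nat.le_of_dvd one_pos hd; omega)
      rw [pow_one] at h3
      exact h3 h2
    · exact cyc_not_dvd_X hn (hP.dvd_of_dvd_pow h2)
  have h12 := VV_div hP hDD3 hnd
  rw [← e_div] at h12
  exact VV_conclude hP h12

end goalB3

section final

lemma cyc_eq_of_dvd {a e : ℕ} (ha : 0 < a) (he : 0 < e)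
    (h : cyclotomic a ℚ ∣ cyclotomic e ℚ) : a = e := by
  have h1 := (cyclotomic.irreducible_rat ha).associated_of_dvd
    (cyclotomic.irreducible_rat he) h
  have h2 := eq_of_monic_of_associated (cyclotomic.monic a ℚ) (cyclotomic.monic e ℚ) h1
  exact cyclotomic_injective h2

lemma cyc_coprime_prod {a : ℕ} (ha : 2 ≤ a) (s : Finset ℕ)
    (hs : ∀ e ∈ s, 0 < e) (hne : a ∉ s) :
    IsCoprime (cyclotomic a ℚ) (∏ e ∈ s, cyclotomic e ℚ) := by
  refine IsCoprime.prod_right fun e he => ?_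
  rw [(cyclotomic.irreducible_rat (show 0 < a from by omega)).coprime_iff_not_dvd]
  intro h
  exact hne ((cyc_eq_of_dvd (by omega) (hs e he) h) ▸ he)

lemma prod_cyc_dvd {Y : Polynomial ℚ} : ∀ s : Finset ℕ, (∀ e ∈ s, 2 ≤ e) →
    (∀ e ∈ s, cyclotomic e ℚ ∣ Y) → (∏ e ∈ s, cyclotomic e ℚ) ∣ Y := by
  classical
  intro s
  induction s using Finset.induction_on with
  | empty => simp
  | insert _ _ hni ih =>
    rename_i a s
    intro h2 hdvd
    rw [Finset.prod_insert hni]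
    refine IsCoprime.mul_dvd ?_ (hdvd a (Finset.mem_insert_self a s)) ?_
    · exact cyc_coprime_prod (h2 a (Finset.mem_insert_self a s)) s
        (fun e he => by have := h2 e (Finset.mem_insert_of_mem he); omega) hni
    · exact ih (fun e he => h2 e (Finset.mem_insert_of_mem he))
        (fun e he => hdvd e (Finset.mem_insert_of_mem he))

lemma modulus_dvd {n : ℕ} (hn : 2 ≤ n) : qint n * (cyclotomic n ℚ) ^ 2 ∣ DD n := by
  classical
  set s : Finset ℕ := (n.divisors.erase 1).erase n with hs
  have hn_mem : n ∈ n.divisors.erase 1 := by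
    rw [Finset.mem_erase]
    exact ⟨by omega, Nat.mem_divisors_self n (by omega)⟩
  have hfact : qint n = cyclotomic n ℚ * ∏ e ∈ s, cyclotomic e ℚ := by
    rw [qint_eq_prod (show 0 < n from by omega), ← Finset.insert_erase hn_mem,
        Finset.prod_insert (Finset.notMem_erase n _), hs]
  have hsprop : ∀ e ∈ s, 2 ≤ e ∧ e ∣ n := by
    intro e he
    rw [hs, Finset.mem_erase, Finset.mem_erase] at he
    obtain ⟨h1, h2, h3⟩ := he
    have h4 := Nat.mem_divisors.mp h3
    have h5 : 0 < e := Nat.pos_of_mem_divisors h3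
    exact ⟨by omega, h4.1⟩
  have hprod_dvd : (∏ e ∈ s, cyclotomic e ℚ) ∣ DD n :=
    prod_cyc_dvd s (fun e he => (hsprop e he).1)
      (fun e he => goalA n e (hsprop e he).1 (hsprop e he).2 (by omega))
  have hcube : (cyclotomic n ℚ) ^ 3 ∣ DD n := goalB hn
  have hcop : IsCoprime ((cyclotomic n ℚ) ^ 3) (∏ e ∈ s, cyclotomic e ℚ) := by
    refine IsCoprime.pow_left ?_
    refine cyc_coprime_prod hn s (fun e he => by have := (hsprop e he).1; omega)
      (Finset.notMem_erase n _)
  have h6 : (cyclotomic n ℚ) ^ 3 * (∏ e ∈ s, cyclotomic e ℚ) ∣ DD n :=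
    hcop.mul_dvd hcube hprod_dvd
  have e7 : qint n * (cyclotomic n ℚ) ^ 2
      = (cyclotomic n ℚ) ^ 3 * (∏ e ∈ s, cyclotomic e ℚ) := by
    rw [hfact]; ring
  rw [e7]
  exact h6

lemma DD_one : DD 1 = 0 := by
  rw [DD, qint]
  simp [tP, gb_zero]

lemma sum_match (n : ℕ) :
    (∑ k ∈ Finset.range n,
      q ^ (((n : ℤ) - (k : ℤ)) ^ 2) * qbinom (n + k) k ^ 2 * qbinom (n - 1) k ^ 2)
    = ∑ k ∈ Finset.range n, tR n k := by
  refine Finset.sum_congr rfl fun k hk => ?_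
  have hk' := Finset.mem_range.mp hk
  have e : (((n : ℤ) - (k : ℤ)) ^ 2) = (((n - k) ^ 2 : ℕ) : ℤ) := by
    push_cast [Nat.cast_sub hk'.le]
    ring
  rw [tR, e, zpow_natCast]

end final


/-- Equation (1.4) (Gu–Guo / the `r = 1` case of the main theorem): for a positive integer `n`,
`∑_{k=0}^{n-1} q^{(n-k)²} [n+k choose k]² [n-1 choose k]² ≡ q[n]  (mod [n] Φ_n(q)²)`,
i.e. the difference is a polynomial multiple of `[n] Φ_n(q)²`. -/
theorem gu_guo_conjecture (n : ℕ) (hn : 0 < n) :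
    ∃ f : Polynomial ℚ,
      (∑ k ∈ Finset.range n,
        q ^ (((n : ℤ) - (k : ℤ)) ^ 2) * qbinom (n + k) k ^ 2 * qbinom (n - 1) k ^ 2) -
        q * qintR n
      = algebraMap (Polynomial ℚ) (RatFunc ℚ)
          (qint n * (Polynomial.cyclotomic n ℚ) ^ 2 * f) := by
  have hdvd : qint n * (cyclotomic n ℚ) ^ 2 ∣ DD n := by
    rcases eq_or_lt_of_le (show 1 ≤ n from hn) with h1 | h1
    · rw [← h1, DD_one]
      exact dvd_zero _
    · exact modulus_dvd h1
  obtain ⟨f, hf⟩ := hdvd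
  refine ⟨f, ?_⟩
  rw [sum_match n, sum_tR n, hf]
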